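/- arXiv:2203.11967 — 2 statements merged into one kernel-verified Lean document; each statement's English description precedes it below -/
import Mathlib

section
/- Under Assumption 1 (f_b(1)=0, f_b'(c) ≤ 0 with strict inequality for c < 1), the bearing control gradient g = -f_b(c)β - f_b'(c)(I - ββᵀ)β_g vanishes if and only if β = β_g, where c = ⟪β_g, β⟫ and β, β_g are unit vectors. -/
open scoped RealInnerProductSpace

theorem bearing_gradient_vanishes_iff {n : ℕ} (fb : ℝ → ℝ)
    (hdiff : Differentiable ℝ fb) (h1 : fb 1 = 0)
    (hd1 : deriv fb 1 ≤ 0)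
    (hderiv : ∀ c ∈ Set.Ico (-1 : ℝ) 1, deriv fb c < 0)
    (β βg : EuclideanSpace ℝ (Fin n)) (hβ : ‖β‖ = 1) (hβg : ‖βg‖ = 1) :
    (-(fb ⟪βg, β⟫) • β - deriv fb ⟪βg, β⟫ • (βg - ⟪βg, β⟫ • β) = 0) ↔ β = βg := by
  set c : ℝ := ⟪βg, β⟫ with hc
  have hbb : ⟪β, β⟫ = (1 : ℝ) := by
    rw [real_inner_self_eq_norm_sq, hβ]; norm_num
  constructor
  · intro hg
    have hcle : |c| ≤ 1 := by
      calc |c| ≤ ‖βg‖ * ‖β‖ := abs_real_inner_le_norm βg β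
        _ = 1 := by rw [hβ, hβg]; ring
    have hfbc : fb c = 0 := by
      have h0 : ⟪-(fb c) • β - deriv fb c • (βg - c • β), β⟫ = (0 : ℝ) := by
        rw [hg]; simp
      rw [inner_sub_left, real_inner_smul_left, real_inner_smul_left,
        inner_sub_left, real_inner_smul_left, hbb, ← hc] at h0
      nlinarith [h0]
    have hanti : StrictAntiOn fb (Set.Icc (-1 : ℝ) 1) := by
      apply strictAntiOn_of_deriv_neg (convex_Icc _ _) hdiff.continuous.continuousOn
      intro x hx
      rw [interior_Icc] at hx
      exact hderiv x ⟨le_of_lt hx.1, hx.2⟩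
    have hc1 : c = 1 := by
      by_contra h
      have hclt : c < 1 := lt_of_le_of_ne (le_of_abs_le hcle) h
      have := hanti ⟨neg_le_of_abs_le hcle, le_of_lt hclt⟩
        (Set.right_mem_Icc.mpr (by norm_num)) hclt
      linarith
    have : βg = β := (inner_eq_one_iff_of_norm_eq_one hβg hβ).mp hc1
    exact this.symm
  · intro h
    subst h
    have : c = 1 := hbb
    rw [this, h1]
    simp
end

section
/- The gradient of the bearing cost d·f_b(c) with respect to x_j equals f_b(c)β + f_b'(c)(I - ββᵀ)β_g, where d = ‖x_j - x_i‖, β = (x_j - x_i)/d, c = ⟪β_g, β⟫, for x_i ≠ x_j and f_b continuously differentiable. -/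
/-!
The gradient of the norm away from `0` is the unit vector `β = x / ‖x‖`. Writing
`c = ⟪β_g, β⟫ = ‖x‖⁻¹ ⟪β_g, x⟫`, the product rule gives `∇c = ‖x‖⁻¹ (β_g - c β)`, the component
of `β_g` orthogonal to `β` scaled by `1 / ‖x‖`. The product and chain rules for `‖x‖ f_b(c)` then
give `f_b(c) β + ‖x‖ f_b'(c) ∇c`, in which the factors `‖x‖` and `‖x‖⁻¹` cancel. Translating by
`x_i` moves the computation to `x = x_j - x_i`.
-/

open scoped RealInnerProductSpace

open InnerProductSpace

section GradientCalculus

variable {E : Type*} [NormedAddCommGroup E] [InnerProductSpace ℝ E] [CompleteSpace E]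
  {f g : E → ℝ} {f' g' x : E}

theorem HasGradientAt.mul (hf : HasGradientAt f f' x) (hg : HasGradientAt g g' x) :
    HasGradientAt (fun y => f y * g y) (f x • g' + g x • f') x := by
  rw [hasGradientAt_iff_hasFDerivAt] at *
  rw [map_add, map_smul, map_smul]
  exact hf.mul hg

theorem HasDerivAt.comp_hasGradientAt {φ : ℝ → ℝ} {φ' : ℝ} (hφ : HasDerivAt φ φ' (f x))
    (hf : HasGradientAt f f' x) : HasGradientAt (fun y => φ (f y)) (φ' • f') x := by
  rw [hasGradientAt_iff_hasFDerivAt] at *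
  rw [map_smul]
  exact hφ.comp_hasFDerivAt x hf

theorem HasGradientAt.comp_sub_const (a : E) (hf : HasGradientAt f f' (x - a)) :
    HasGradientAt (fun y => f (y - a)) f' x := by
  rw [hasGradientAt_iff_hasFDerivAt] at *
  have := hf.comp x ((hasFDerivAt_id x).sub_const a)
  rwa [ContinuousLinearMap.comp_id] at this

theorem hasGradientAt_inner_right (v : E) : HasGradientAt (fun y => ⟪v, y⟫) v x := by
  rw [hasGradientAt_iff_hasFDerivAt]
  exact (innerSL ℝ v).hasFDerivAt

theorem hasGradientAt_norm_sq (x : E) : HasGradientAt (fun y => ‖y‖ ^ 2) ((2 : ℝ) • x) x := by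
  rw [hasGradientAt_iff_hasFDerivAt, map_smul, two_smul, ← two_nsmul]
  exact (hasStrictFDerivAt_norm_sq x).hasFDerivAt

theorem hasGradientAt_norm (hx : x ≠ 0) : HasGradientAt (‖·‖) (‖x‖⁻¹ • x) x := by
  have := (Real.hasDerivAt_sqrt (by positivity : ‖x‖ ^ 2 ≠ 0)).comp_hasGradientAt
    (f := fun y : E => ‖y‖ ^ 2) (hasGradientAt_norm_sq x)
  simp only [Real.sqrt_sq (norm_nonneg _)] at this
  convert this using 1
  match_scalars
  field_simp

end GradientCalculus

section Bearing

variable {E : Type*} [NormedAddCommGroup E] [InnerProductSpace ℝ E]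

noncomputable def bearing (x : E) : E := ‖x‖⁻¹ • x

noncomputable def bearingCost (φ : ℝ → ℝ) (v x : E) : ℝ := ‖x‖ * φ ⟪v, bearing x⟫

variable [CompleteSpace E] {x : E}

theorem hasGradientAt_inner_bearing (v : E) (hx : x ≠ 0) :
    HasGradientAt (fun y => ⟪v, bearing y⟫) (‖x‖⁻¹ • (v - ⟪v, bearing x⟫ • bearing x)) x := by
  have hinv := (hasDerivAt_inv (norm_ne_zero_iff.mpr hx)).comp_hasGradientAt
    (f := (‖·‖)) (hasGradientAt_norm hx)
  have := hinv.mul (hasGradientAt_inner_right (x := x) v)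
  simp only [bearing, real_inner_smul_right]
  convert this using 1
  match_scalars <;> field_simp

theorem hasGradientAt_bearingCost {φ : ℝ → ℝ} (v : E) (hx : x ≠ 0)
    (hφ : DifferentiableAt ℝ φ ⟪v, bearing x⟫) :
    HasGradientAt (bearingCost φ v)
      (φ ⟪v, bearing x⟫ • bearing x + deriv φ ⟪v, bearing x⟫ • (v - ⟪v, bearing x⟫ • bearing x))
      x := by
  have := (hasGradientAt_norm hx).mul
    (hφ.hasDerivAt.comp_hasGradientAt (f := fun y => ⟪v, bearing y⟫)
      (hasGradientAt_inner_bearing v hx))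
  rwa [smul_comm ‖x‖, smul_inv_smul₀ (norm_ne_zero_iff.mpr hx), add_comm] at this

end Bearing

theorem bearing_cost_gradient_general {n : ℕ} (fb : ℝ → ℝ) (hfb : ContDiff ℝ 1 fb)
    (βg : EuclideanSpace ℝ (Fin n))
    (xi xj : EuclideanSpace ℝ (Fin n)) (h : xi ≠ xj) :
    HasGradientAt
      (fun y : EuclideanSpace ℝ (Fin n) =>
        ‖y - xi‖ * fb ⟪βg, ‖y - xi‖⁻¹ • (y - xi)⟫)
      (fb ⟪βg, ‖xj - xi‖⁻¹ • (xj - xi)⟫ • (‖xj - xi‖⁻¹ • (xj - xi)) +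
        deriv fb ⟪βg, ‖xj - xi‖⁻¹ • (xj - xi)⟫ •
          (βg - ⟪βg, ‖xj - xi‖⁻¹ • (xj - xi)⟫ • (‖xj - xi‖⁻¹ • (xj - xi))))
      xj :=
  HasGradientAt.comp_sub_const xi <| hasGradientAt_bearingCost βg (sub_ne_zero.mpr h.symm)
    (hfb.differentiable one_ne_zero _)

theorem bearing_cost_gradient {n : ℕ} (fb : ℝ → ℝ) (hfb : ContDiff ℝ 1 fb)
    (βg : EuclideanSpace ℝ (Fin n)) (hβg : ‖βg‖ = 1)
    (xi xj : EuclideanSpace ℝ (Fin n)) (h : xi ≠ xj) :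
    HasGradientAt
      (fun y : EuclideanSpace ℝ (Fin n) =>
        ‖y - xi‖ * fb ⟪βg, ‖y - xi‖⁻¹ • (y - xi)⟫)
      (fb ⟪βg, ‖xj - xi‖⁻¹ • (xj - xi)⟫ • (‖xj - xi‖⁻¹ • (xj - xi)) +
        deriv fb ⟪βg, ‖xj - xi‖⁻¹ • (xj - xi)⟫ •
          (βg - ⟪βg, ‖xj - xi‖⁻¹ • (xj - xi)⟫ • (‖xj - xi‖⁻¹ • (xj - xi))))
      xj :=
  bearing_cost_gradient_general fb hfb βg xi xj h
end
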